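/- A partition μ with non-repeating odd parts, with 2-modular Durfee square size k ≥ 1 and 2-modular successive rank vector (r_1, ..., r_k), is a minimal basis partition if and only if: (a) no row of its 2-modular Ferrers graph strictly below the Durfee square is equal in length (number of entries) to a column of the graph strictly to the right of the Durfee square, and (b) if r_k = 0 then the entry in position (k,k) of the Durfee square is 1. -/

import Mathlib

open Finset
open scoped Classical

namespace BasisPartitions

/-! ### Ordinary partitions -/

/-- The parts of a partition, listed in weakly decreasing order. -/
def sparts {n : ℕ} (π : n.Partition) : List ℕ := π.parts.sort (· ≥ ·)

/-- `conj L j` is the number of parts that are `≥ j`, i.e. the `j`-th part of the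
conjugate partition (for `j ≥ 1`). -/
def conj (L : List ℕ) (j : ℕ) : ℕ := L.countP (fun b => j ≤ b)

/-- The Durfee square size: the largest `k` such that the `k`-th part is `≥ k`. -/
def durfee (L : List ℕ) : ℕ := (List.range L.length).countP (fun i => i + 1 ≤ L.getD i 0)

/-- The `(i+1)`-st successive rank `r_{i+1} = b_{i+1} - c_{i+1}` (0-indexed `i`). -/
def rank (L : List ℕ) (i : ℕ) : ℤ := (L.getD i 0 : ℤ) - (conj L (i + 1) : ℤ)

/-- The successive rank vector `(r_1, ..., r_k)` where `k` is the Durfee square size. -/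
def ranks (L : List ℕ) : List ℤ := (List.range (durfee L)).map (rank L)

/-- A basis partition: the partitioned number is minimal among all partitions having
the same successive rank vector. -/
def IsBasis {n : ℕ} (π : n.Partition) : Prop :=
  ∀ (m : ℕ) (π' : m.Partition), ranks (sparts π') = ranks (sparts π) → n ≤ m

/-- The signature: the number of distinct part sizes below the Durfee square. -/
def sig (L : List ℕ) : ℕ := ((L.drop (durfee L)).dedup).length

/-- `b(n;k)`: the number of basis partitions of `n` with Durfee square size `k`. -/
noncomputable def bCount (n k : ℕ) : ℕ :=
  Nat.card {π : n.Partition // IsBasis π ∧ durfee (sparts π) = k}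

/-- `b(n,k,s)`: the number of basis partitions of `n` with Durfee square size `k`
and signature `s`. -/
noncomputable def bCount3 (n k s : ℕ) : ℕ :=
  Nat.card {π : n.Partition // IsBasis π ∧ durfee (sparts π) = k ∧ sig (sparts π) = s}

/-- `B(n;j)`: the number of basis partitions of `n` with signature `j`. -/
noncomputable def BCount (n j : ℕ) : ℕ :=
  Nat.card {π : n.Partition // IsBasis π ∧ sig (sparts π) = j}

/-- Rogers–Ramanujan condition: exactly `k` parts, consecutive gaps `≥ 2`, last part `≥ 1`. -/
def RR (L : List ℕ) (k : ℕ) : Prop :=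
  L.length = k ∧ (∀ i, i + 1 < k → L.getD (i + 1) 0 + 2 ≤ L.getD i 0) ∧ 1 ≤ L.getD (k - 1) 0

/-- `t(π)` for a Rogers–Ramanujan partition: the number of gaps `> 2`, plus 1 if the
last part is `> 1`. -/
def tRR (L : List ℕ) (k : ℕ) : ℕ :=
  ((Finset.range (k - 1)).filter (fun i => L.getD (i + 1) 0 + 2 < L.getD i 0)).card +
    (if 1 < L.getD (k - 1) 0 then 1 else 0)

/-- Primary condition: exactly `k` parts, each part `≥ k`. -/
def Primary (L : List ℕ) (k : ℕ) : Prop := L.length = k ∧ ∀ x ∈ L, k ≤ x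

/-- `t(π)` for a primary partition: the number of strict descents, plus 1 if the
last part is `> k`. -/
def tP (L : List ℕ) (k : ℕ) : ℕ :=
  ((Finset.range (k - 1)).filter (fun i => L.getD (i + 1) 0 < L.getD i 0)).card +
    (if k < L.getD (k - 1) 0 then 1 else 0)

/-- A complete basis partition: every `j` with `1 ≤ j ≤ k-1` occurs as a part of `π_b`
(a row below the Durfee square) or as a part of `π_r` (a column length strictly to the
right of the Durfee square). -/
def IsComplete {n : ℕ} (π : n.Partition) : Prop :=
  ∀ j : ℕ, 1 ≤ j → j < durfee (sparts π) →
    j ∈ (sparts π).drop (durfee (sparts π)) ∨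
      ∃ c : ℕ, durfee (sparts π) < c ∧ conj (sparts π) c = j

/-- `b_c(n)`: the number of complete basis partitions of `n`. -/
noncomputable def bc (n : ℕ) : ℕ := Nat.card {π : n.Partition // IsBasis π ∧ IsComplete π}

/-! ### Partitions with non-repeating odd parts and their 2-modular graphs -/

/-- Partitions with non-repeating (distinct) odd parts. -/
def Pod {n : ℕ} (π : n.Partition) : Prop := ∀ x, Odd x → π.parts.count x ≤ 1

/-- The size (sum of entries) of the `c`-th column (1-indexed) of the 2-modular graph. -/
def mcolSize (L : List ℕ) (c : ℕ) : ℕ :=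
  (L.map (fun x => if 2 * c ≤ x then 2 else if x = 2 * c - 1 then 1 else 0)).sum

/-- The length (number of entries) of the `c`-th column (1-indexed) of the 2-modular graph. -/
def mcolLen (L : List ℕ) (c : ℕ) : ℕ := L.countP (fun x => 2 * c - 1 ≤ x)

/-- The number of entries in a row of the 2-modular graph recording the part `x`,
namely `⌈x/2⌉`. -/
def mrowLen (x : ℕ) : ℕ := (x + 1) / 2

/-- The 2-modular Durfee square size: the largest `k` with `⌈b_k/2⌉ ≥ k`. -/
def mdurfee (L : List ℕ) : ℕ := (List.range L.length).countP (fun i => 2 * i + 1 ≤ L.getD i 0)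

/-- The `(i+1)`-st 2-modular successive rank: (size of row `i+1`) − (size of column `i+1`). -/
def mrank (L : List ℕ) (i : ℕ) : ℤ := (L.getD i 0 : ℤ) - (mcolSize L (i + 1) : ℤ)

/-- The 2-modular successive rank vector. -/
def mranks (L : List ℕ) : List ℤ := (List.range (mdurfee L)).map (mrank L)

/-- A minimal basis partition in `P_{o,d}`: the partitioned number is minimal among all
partitions with non-repeating odd parts having the same 2-modular successive rank vector. -/
def MinBasis {n : ℕ} (μ : n.Partition) : Prop :=
  Pod μ ∧ ∀ (m : ℕ) (μ' : m.Partition), Pod μ' →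
    mranks (sparts μ') = mranks (sparts μ) → n ≤ m

/-- A basis partition in `P_{o,d}`: no row of the 2-modular graph strictly below the Durfee
square has size equal to the size of a column strictly to the right of the Durfee square. -/
def PodBasis {n : ℕ} (π : n.Partition) : Prop :=
  Pod π ∧ ∀ i, mdurfee (sparts π) ≤ i → i < (sparts π).length →
    ∀ c, mdurfee (sparts π) < c → mcolSize (sparts π) c ≠ (sparts π).getD i 0

/-- The signature of a basis partition in `P_{o,d}`: the number of distinct sizes among the
rows of the 2-modular graph strictly below the Durfee square. -/
def msig (L : List ℕ) : ℕ := ((L.drop (mdurfee L)).dedup).length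

/-- The ℓ-signature: the number of distinct lengths among the rows of the 2-modular
graph strictly below the Durfee square. -/
def lsig (L : List ℕ) : ℕ := (((L.drop (mdurfee L)).map mrowLen).dedup).length

/-- `b(n;j)` for `P_{o,d}`: the number of basis partitions of `n` in `P_{o,d}` with
signature `j`. -/
noncomputable def podB (n j : ℕ) : ℕ := Nat.card {π : n.Partition // PodBasis π ∧ msig (sparts π) = j}

/-- The number of odd parts. -/
def numOdd (L : List ℕ) : ℕ := L.countP (fun x => x % 2 = 1)

/-- A special partition: distinct parts with consecutive differences `≥ 4`, where a
difference equal to `4` is permitted only when both parts are even. -/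
def Special (L : List ℕ) : Prop :=
  ∀ i, i + 1 < L.length →
    L.getD (i + 1) 0 + 4 ≤ L.getD i 0 ∧
      (L.getD i 0 = L.getD (i + 1) 0 + 4 → Even (L.getD i 0) ∧ Even (L.getD (i + 1) 0))

/-- The `i`-th part of a special partition, with the convention that the part just after
the last one is `-2`. -/
def hpart (L : List ℕ) (i : ℕ) : ℤ := if i < L.length then (L.getD i 0 : ℤ) else -2

/-- `ℓ(π)`: the number of gaps `> 4` in a special partition, with the convention
`h_{k+1} = -2`. -/
def ell (L : List ℕ) : ℕ :=
  ((Finset.range L.length).filter (fun i => 4 < hpart L i - hpart L (i + 1))).card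

/-!
Around the 2-modular Durfee square of side `k`, describe level `i` of the graph by the arm `uᵢ`
(cells of row `i` right of the square), the leg `vᵢ` (cells of column `i` below it), the parity
`pᵢ` of row `i` and the number `wᵢ ≤ 1` of entries `1` in the leg. Then
`rᵢ = 2 (uᵢ - vᵢ) - pᵢ + wᵢ`, plus `1` when the corner `(k, k)` is a `1`.

If (a) fails, some row below the square and some column to its right have the same length `l`;
removing the last cell of row `l` and of column `l` gives a smaller partition in `P_{o,d}` with the
same ranks. If (b) fails while (a) holds, the corner is a `2`, and turning it into a `1` does the
same. So a minimal basis partition satisfies (a) and (b).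

Conversely, under (a) the arm and the leg never both grow from level `i + 1` to level `i`, which
together with the distinctness of odd parts makes `(uᵢ - uᵢ₊₁, vᵢ - vᵢ₊₁, pᵢ, wᵢ)` a function of
`rᵢ`; (b) settles the corner. Descending from level `k` the rank vector therefore determines the
partition, and every partition with the same ranks reduces to this one by the moves above.
-/

section SortedLists

variable {L : List ℕ}

theorem pairwise_ge_iff_getD :
    L.Pairwise (· ≥ ·) ↔ ∀ i j, i ≤ j → L.getD j 0 ≤ L.getD i 0 := by
  refine ⟨fun hs i j hij => ?_, fun h => List.pairwise_iff_getElem.2 fun i j hi hj hij => ?_⟩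
  · rcases lt_or_ge j L.length with hj | hj
    · rw [List.getD_eq_getElem _ _ hj, List.getD_eq_getElem _ _ (hij.trans_lt hj)]
      rcases hij.lt_or_eq with hlt | rfl
      · exact List.pairwise_iff_getElem.1 hs i j _ hj hlt
      · rfl
    · rw [List.getD_eq_default _ _ hj]
      exact Nat.zero_le _
  · have := h i j hij.le
    rwa [List.getD_eq_getElem _ _ hi, List.getD_eq_getElem _ _ hj] at this

theorem getD_le_getD (hs : L.Pairwise (· ≥ ·)) {i j : ℕ} (hij : i ≤ j) :
    L.getD j 0 ≤ L.getD i 0 :=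
  pairwise_ge_iff_getD.1 hs i j hij

theorem lt_length_of_getD_pos {i : ℕ} (h : 0 < L.getD i 0) : i < L.length := by
  by_contra hi
  rw [List.getD_eq_default _ _ (not_lt.1 hi)] at h
  exact h.false

theorem getD_mem_take {i j : ℕ} (hij : i < j) (hi : i < L.length) : L.getD i 0 ∈ L.take j := by
  rw [List.getD_eq_getElem _ _ hi, List.mem_take_iff_getElem]
  exact ⟨i, by omega, rfl⟩

theorem getD_mem_drop {i j : ℕ} (hji : j ≤ i) (hi : i < L.length) : L.getD i 0 ∈ L.drop j := by
  rw [List.getD_eq_getElem _ _ hi, List.mem_drop_iff_getElem]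
  exact ⟨i - j, by omega, by simp [Nat.add_sub_cancel' hji]⟩

theorem exists_getD_eq_of_mem_drop {j x : ℕ} (hx : x ∈ L.drop j) :
    ∃ i, j ≤ i ∧ L.getD i 0 = x := by
  obtain ⟨t, ht, rfl⟩ := List.mem_drop_iff_getElem.1 hx
  exact ⟨j + t, by omega, List.getD_eq_getElem _ _ (by omega)⟩

theorem take_eq_take_of_getD_eq {M : List ℕ} {k : ℕ} (hL : k ≤ L.length) (hM : k ≤ M.length)
    (h : ∀ i < k, L.getD i 0 = M.getD i 0) : L.take k = M.take k := by
  refine List.ext_getElem (by simp; omega) fun t h₁ h₂ => ?_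
  simp only [List.length_take] at h₁ h₂
  have := h t (by omega)
  rw [List.getD_eq_getElem _ _ (by omega), List.getD_eq_getElem _ _ (by omega)] at this
  rw [List.getElem_take, List.getElem_take, this]

theorem not_mem_of_getD_lt_of_lt_getD (hs : L.Pairwise (· ≥ ·)) {p y : ℕ}
    (h₁ : L.getD (p + 1) 0 < y) (h₂ : y < L.getD p 0) : y ∉ L := by
  intro hy
  obtain ⟨t, ht, rfl⟩ := List.mem_iff_getElem.1 hy
  rw [← List.getD_eq_getElem _ 0 ht] at h₁ h₂
  rcases le_or_gt t p with htp | htp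
  · exact absurd (getD_le_getD hs htp) (not_le.2 h₂)
  · exact absurd (getD_le_getD hs htp) (not_le.2 h₁)

theorem exists_mem_of_countP_lt {α : Type*} {l : List α} {p q : α → Bool}
    (h : l.countP p < l.countP q) : ∃ x ∈ l, q x ∧ ¬ p x := by
  by_contra! hall
  exact absurd (List.countP_mono_left hall) (not_le.2 h)

theorem countP_le_eq_countP_succ_le_add_count (l : List ℕ) (v : ℕ) :
    l.countP (v ≤ ·) = l.countP (v + 1 ≤ ·) + l.count v := by
  induction l with
  | nil => rfl
  | cons a t ih =>
    simp only [List.countP_cons, List.count_cons, ih, beq_iff_eq, decide_eq_true_eq]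
    split_ifs <;> omega

theorem lt_countP_le_iff (hs : L.Pairwise (· ≥ ·)) {v : ℕ} (hv : 0 < v) (i : ℕ) :
    i < L.countP (v ≤ ·) ↔ v ≤ L.getD i 0 := by
  induction L generalizing i with
  | nil => simp; omega
  | cons a t ih =>
    by_cases ha : v ≤ a
    · cases i <;> simp [ha, ih hs.of_cons]
    · have hle : (a :: t).getD i 0 ≤ a := getD_le_getD hs (Nat.zero_le i)
      have h0 : t.countP (v ≤ ·) = 0 := List.countP_eq_zero.2 fun x hx hvx =>
        ha ((of_decide_eq_true hvx).trans (List.rel_of_pairwise_cons hs hx))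
      simp only [List.countP_cons, h0, ha, decide_false, Bool.false_eq_true, if_false]
      omega

theorem countP_le_eq (hs : L.Pairwise (· ≥ ·)) {v m : ℕ} (hv : 0 < v)
    (h₁ : ∀ i < m, v ≤ L.getD i 0) (h₂ : L.getD m 0 < v) : L.countP (v ≤ ·) = m :=
  eq_of_forall_lt_iff fun i => by
    rw [lt_countP_le_iff hs hv]
    refine ⟨fun hi => ?_, h₁ i⟩
    by_contra him
    exact absurd (getD_le_getD hs (not_lt.1 him)) (by omega)

theorem eq_of_countP_le_eq {A B : List ℕ} (hA : A.Pairwise (· ≥ ·)) (hB : B.Pairwise (· ≥ ·))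
    (hA₀ : ∀ x ∈ A, 0 < x) (hB₀ : ∀ x ∈ B, 0 < x)
    (h : ∀ v, 0 < v → A.countP (v ≤ ·) = B.countP (v ≤ ·)) : A = B := by
  have hget : ∀ i, A.getD i 0 = B.getD i 0 := fun i => by
    have key : ∀ v, 0 < v → (v ≤ A.getD i 0 ↔ v ≤ B.getD i 0) := fun v hv => by
      rw [← lt_countP_le_iff hA hv, ← lt_countP_le_iff hB hv, h v hv]
    have h₁ : 0 < A.getD i 0 → A.getD i 0 ≤ B.getD i 0 := fun h => (key _ h).1 le_rfl
    have h₂ : 0 < B.getD i 0 → B.getD i 0 ≤ A.getD i 0 := fun h => (key _ h).2 le_rfl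
    omega
  have hlen : A.length = B.length := by
    rw [← List.countP_eq_length.2 fun x hx => decide_eq_true (hA₀ x hx),
      ← List.countP_eq_length.2 fun x hx => decide_eq_true (hB₀ x hx)]
    exact h 1 one_pos
  refine List.ext_getElem hlen fun i h₁ h₂ => ?_
  rw [← List.getD_eq_getElem A 0 h₁, ← List.getD_eq_getElem B 0 h₂]
  exact hget i

theorem lt_countP_range_iff {p : ℕ → Bool} (hp : ∀ i j, i ≤ j → p j → p i) (n i : ℕ) :
    i < (List.range n).countP p ↔ i < n ∧ p i := by
  induction n generalizing i with
  | zero => simp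
  | succ n ih =>
    rw [List.range_succ, List.countP_append]
    by_cases hn : p n
    · have hall : (List.range n).countP p = n :=
        eq_of_forall_lt_iff fun j => by
          rw [ih]; exact ⟨And.left, fun hj => ⟨hj, hp j n hj.le hn⟩⟩
      simp only [hall, List.countP_singleton, hn, if_true]
      exact ⟨fun hi => ⟨hi, hp i n (by omega) hn⟩, And.left⟩
    · simp only [List.countP_singleton, hn, ih, Bool.false_eq_true, if_false, add_zero]
      exact ⟨fun h => ⟨by omega, h.2⟩, fun h => ⟨by
        rcases Nat.lt_succ_iff_lt_or_eq.1 h.1 with h' | rfl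
        · exact h'
        · exact absurd h.2 hn, h.2⟩⟩

end SortedLists

section Durfee

variable {L : List ℕ} {k : ℕ}

theorem lt_mdurfee_iff (hs : L.Pairwise (· ≥ ·)) (i : ℕ) :
    i < mdurfee L ↔ 2 * i + 1 ≤ L.getD i 0 := by
  unfold mdurfee
  rw [lt_countP_range_iff (fun a b hab hb => by
    have := getD_le_getD hs hab; simp only [decide_eq_true_eq] at hb ⊢; omega)]
  simp only [decide_eq_true_eq]
  exact ⟨And.right, fun h => ⟨lt_length_of_getD_pos (by omega), h⟩⟩

theorem mdurfee_le_length (L : List ℕ) : mdurfee L ≤ L.length :=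
  List.countP_le_length.trans_eq List.length_range

theorem two_mul_sub_one_le_getD (hs : L.Pairwise (· ≥ ·)) (hkd : mdurfee L = k) {i : ℕ}
    (hi : i < k) : 2 * k - 1 ≤ L.getD i 0 := by
  have := (lt_mdurfee_iff hs (k - 1)).1 (by omega)
  have := getD_le_getD hs (show i ≤ k - 1 by omega)
  omega

theorem getD_le_two_mul (hs : L.Pairwise (· ≥ ·)) (hkd : mdurfee L = k) {i : ℕ}
    (hi : k ≤ i) : L.getD i 0 ≤ 2 * k := by
  have := (lt_mdurfee_iff hs k).not.1 (by omega)
  have := getD_le_getD hs hi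
  omega

theorem le_two_mul_of_mem_drop (hs : L.Pairwise (· ≥ ·)) (hkd : mdurfee L = k) {x : ℕ}
    (hx : x ∈ L.drop k) : x ≤ 2 * k := by
  obtain ⟨i, hi, rfl⟩ := exists_getD_eq_of_mem_drop hx
  exact getD_le_two_mul hs hkd hi

end Durfee

section Decrement

def decAt (L : List ℕ) (p : ℕ) : List ℕ := L.set p (L.getD p 0 - 1)

variable {L : List ℕ} {p : ℕ}

theorem getD_decAt (i : ℕ) :
    (decAt L p).getD i 0 = if i = p then L.getD p 0 - 1 else L.getD i 0 := by
  simp only [decAt, List.getD_eq_getElem?_getD, List.getElem?_set]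
  split_ifs <;> simp_all

theorem getD_decAt_le (i : ℕ) : (decAt L p).getD i 0 ≤ L.getD i 0 := by
  rw [getD_decAt]
  split_ifs with h
  · rw [h]
    exact Nat.sub_le _ _
  · exact le_rfl

theorem sum_map_set_add (f : ℕ → ℕ) (l : List ℕ) {p : ℕ} (y : ℕ) (hp : p < l.length) :
    ((l.set p y).map f).sum + f (l.getD p 0) = (l.map f).sum + f y := by
  induction l generalizing p with
  | nil => simp at hp
  | cons a t ih =>
    cases p with
    | zero => simp; omega
    | succ p =>
      simp only [List.set_cons_succ, List.map_cons, List.sum_cons, List.getD_cons_succ]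
      have := ih (by simpa using hp)
      omega

theorem sum_decAt (hp : 0 < L.getD p 0) : (decAt L p).sum + 1 = L.sum := by
  have := sum_map_set_add id L (L.getD p 0 - 1) (lt_length_of_getD_pos hp)
  simp only [List.map_id, id] at this
  unfold decAt
  omega

theorem pairwise_decAt (hs : L.Pairwise (· ≥ ·)) (hdrop : L.getD (p + 1) 0 < L.getD p 0) :
    (decAt L p).Pairwise (· ≥ ·) := by
  refine pairwise_ge_iff_getD.2 fun i j hij => ?_
  have := getD_le_getD hs hij
  rw [getD_decAt, getD_decAt]
  split_ifs with hj hi hi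
  · exact le_rfl
  · have := getD_le_getD hs (show i ≤ p by omega)
    omega
  · have := getD_le_getD hs (show p + 1 ≤ j by omega)
    omega
  · exact this

theorem count_decAt_le_one (hodd : ∀ x, Odd x → L.count x ≤ 1) (hp : p < L.length)
    (hnew : Odd (L.getD p 0 - 1) → L.getD p 0 - 1 ∉ L) {x : ℕ} (hx : Odd x) :
    (decAt L p).count x ≤ 1 := by
  unfold decAt
  rw [List.count_set hp, ← List.getD_eq_getElem _ 0 hp]
  have := hodd x hx
  by_cases h : L.getD p 0 - 1 = x
  · subst h
    rw [List.count_eq_zero_of_not_mem (hnew hx)]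
    simp
  · simp only [beq_iff_eq, h, if_false]
    omega

theorem mdurfee_decAt (hs : L.Pairwise (· ≥ ·)) (hdrop : L.getD (p + 1) 0 < L.getD p 0)
    (hdur : p < mdurfee L → 2 * p + 2 ≤ L.getD p 0) : mdurfee (decAt L p) = mdurfee L :=
  eq_of_forall_lt_iff fun i => by
    rw [lt_mdurfee_iff (pairwise_decAt hs hdrop), lt_mdurfee_iff hs, getD_decAt]
    split_ifs with h
    · subst h
      have := lt_mdurfee_iff hs i
      omega
    · rfl

/-- Removing the last cell of row `p + 1` moves one unit of size out of the column in which
that row ends. -/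
theorem mcolSize_decAt (hp : 0 < L.getD p 0) (c : ℕ) :
    mcolSize (decAt L p) c + (if c = mrowLen (L.getD p 0) then 1 else 0) = mcolSize L c := by
  have := sum_map_set_add (fun x => if 2 * c ≤ x then 2 else if x = 2 * c - 1 then 1 else 0)
    L (L.getD p 0 - 1) (lt_length_of_getD_pos hp)
  unfold mcolSize decAt mrowLen
  split_ifs at this ⊢ <;> omega

theorem mrank_decAt (hp : 0 < L.getD p 0) (t : ℕ) :
    mrank (decAt L p) t = mrank L t - (if t = p then 1 else 0) +
      (if t + 1 = mrowLen (L.getD p 0) then 1 else 0) := by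
  have := mcolSize_decAt hp (t + 1)
  unfold mrank
  rw [getD_decAt]
  split_ifs at this ⊢ <;> subst_vars <;> push_cast [Nat.cast_pred hp] <;> omega

theorem mranks_eq_of_mrank_eq {M : List ℕ} (hd : mdurfee M = mdurfee L)
    (hr : ∀ i < mdurfee L, mrank M i = mrank L i) : mranks M = mranks L := by
  unfold mranks
  rw [hd]
  exact List.map_congr_left fun i hi => hr i (List.mem_range.1 hi)

end Decrement

section Zeros

variable {L : List ℕ}

theorem getD_filter_ne_zero (hs : L.Pairwise (· ≥ ·)) (i : ℕ) :
    (L.filter (· ≠ 0)).getD i 0 = L.getD i 0 := by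
  induction L generalizing i with
  | nil => rfl
  | cons a t ih =>
    by_cases ha : a = 0
    · have hle : (a :: t).getD i 0 ≤ a := getD_le_getD hs (Nat.zero_le i)
      have ht : t.filter (· ≠ 0) = [] := List.filter_eq_nil_iff.2 fun x hx => by
        have := List.rel_of_pairwise_cons hs hx
        simp only [decide_eq_true_eq, not_not]
        omega
      rw [List.filter_cons_of_neg (by simpa using ha), ht, List.getD_nil]
      subst ha
      omega
    · rw [List.filter_cons_of_pos (by simpa using ha)]
      cases i with
      | zero => rfl
      | succ i => exact ih hs.of_cons i

theorem mcolSize_filter_ne_zero (L : List ℕ) {c : ℕ} (hc : 0 < c) :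
    mcolSize (L.filter (· ≠ 0)) c = mcolSize L c := by
  induction L with
  | nil => rfl
  | cons a t ih =>
    unfold mcolSize at ih ⊢
    by_cases ha : a = 0
    · rw [List.filter_cons_of_neg (by simpa using ha), ih, List.map_cons, List.sum_cons]
      split_ifs <;> omega
    · rw [List.filter_cons_of_pos (by simpa using ha), List.map_cons, List.map_cons,
        List.sum_cons, List.sum_cons, ih]

theorem mranks_filter_ne_zero (hs : L.Pairwise (· ≥ ·)) :
    mranks (L.filter (· ≠ 0)) = mranks L := by
  have hs' : (L.filter (· ≠ 0)).Pairwise (· ≥ ·) := hs.sublist List.filter_sublist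
  have hd : mdurfee (L.filter (· ≠ 0)) = mdurfee L := eq_of_forall_lt_iff fun i => by
    rw [lt_mdurfee_iff hs', lt_mdurfee_iff hs, getD_filter_ne_zero hs]
  refine mranks_eq_of_mrank_eq hd fun i _ => ?_
  unfold mrank
  rw [getD_filter_ne_zero hs, mcolSize_filter_ne_zero L (Nat.succ_pos i)]

theorem sum_filter_ne_zero (L : List ℕ) : (L.filter (· ≠ 0)).sum = L.sum := by
  induction L with
  | nil => rfl
  | cons a t ih =>
    by_cases ha : a = 0
    · rw [List.filter_cons_of_neg (by simpa using ha), ih, List.sum_cons, ha, zero_add]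
    · rw [List.filter_cons_of_pos (by simpa using ha), List.sum_cons, List.sum_cons, ih]

end Zeros

section RankFormula

/-- The number of cells of row `i + 1` to the right of the Durfee square of side `k`. -/
def arm (L : List ℕ) (k i : ℕ) : ℕ := mrowLen (L.getD i 0) - k

/-- The number of cells of column `i + 1` below the Durfee square of side `k`. -/
def leg (L : List ℕ) (k i : ℕ) : ℕ := (L.drop k).countP (2 * i + 1 ≤ ·)

/-- The number of cells equal to `1` in column `i + 1` below the Durfee square of side `k`. -/
def legOnes (L : List ℕ) (k i : ℕ) : ℕ := (L.drop k).count (2 * i + 1)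

variable {L : List ℕ} {k i : ℕ}

theorem mcolSize_succ (L : List ℕ) (i : ℕ) :
    mcolSize L (i + 1) = 2 * L.countP (2 * i + 2 ≤ ·) + L.count (2 * i + 1) := by
  induction L with
  | nil => rfl
  | cons a t ih =>
    unfold mcolSize at ih ⊢
    simp only [List.map_cons, List.sum_cons, ih, List.countP_cons, List.count_cons, beq_iff_eq,
      decide_eq_true_eq]
    split_ifs <;> omega

theorem leg_eq_countP_add_legOnes (L : List ℕ) (k i : ℕ) :
    leg L k i = (L.drop k).countP (2 * i + 2 ≤ ·) + legOnes L k i :=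
  countP_le_eq_countP_succ_le_add_count _ _

theorem mcolSize_add_count_take (hs : L.Pairwise (· ≥ ·)) (hkd : mdurfee L = k) (hi : i < k) :
    mcolSize L (i + 1) + (L.take k).count (2 * i + 1) + legOnes L k i =
      2 * k + 2 * leg L k i := by
  have htop : (L.take k).countP (2 * i + 2 ≤ ·) + (L.take k).count (2 * i + 1) = k := by
    have h := countP_le_eq_countP_succ_le_add_count (L.take k) (2 * i + 1)
    rw [show 2 * i + 1 + 1 = 2 * i + 2 by ring, List.countP_eq_length.2, List.length_take,
      min_eq_left (hkd ▸ mdurfee_le_length L)] at h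
    · exact h.symm
    intro x hx
    obtain ⟨t, ht, rfl⟩ := List.mem_take_iff_getElem.1 hx
    have := two_mul_sub_one_le_getD hs hkd (i := t) (by omega)
    rw [List.getD_eq_getElem _ _ (by omega)] at this
    simp only [decide_eq_true_eq]
    omega
  have hc₁ : L.countP (2 * i + 2 ≤ ·) =
      (L.take k).countP (2 * i + 2 ≤ ·) + (L.drop k).countP (2 * i + 2 ≤ ·) := by
    rw [← List.countP_append, List.take_append_drop]
  have hc₂ : L.count (2 * i + 1) = (L.take k).count (2 * i + 1) + legOnes L k i := by
    rw [legOnes, ← List.count_append, List.take_append_drop]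
  rw [mcolSize_succ, hc₁, hc₂, leg_eq_countP_add_legOnes]
  omega

theorem getD_eq_arm (hs : L.Pairwise (· ≥ ·)) (hkd : mdurfee L = k) (hi : i < k) :
    L.getD i 0 = 2 * (k + arm L k i) - L.getD i 0 % 2 := by
  have := two_mul_sub_one_le_getD hs hkd hi
  unfold arm mrowLen
  omega

/-- The last term is `1` exactly when `i + 1 = k` and the corner `(k, k)` holds a `1`. -/
theorem mrank_eq (hs : L.Pairwise (· ≥ ·)) (hkd : mdurfee L = k) (hi : i < k) :
    mrank L i = 2 * ((arm L k i : ℤ) - leg L k i) - (L.getD i 0 % 2 : ℕ) + legOnes L k i +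
      (L.take k).count (2 * i + 1) := by
  have h₁ := mcolSize_add_count_take hs hkd hi
  have h₂ := getD_eq_arm hs hkd hi
  unfold mrank
  omega

theorem count_take_eq_zero (hs : L.Pairwise (· ≥ ·)) (hkd : mdurfee L = k) (hi : i < k)
    (hc : L.getD i 0 ≠ 2 * k - 1) : (L.take k).count (2 * i + 1) = 0 := by
  refine List.count_eq_zero_of_not_mem fun hmem => hc ?_
  obtain ⟨t, ht, heq⟩ := List.mem_take_iff_getElem.1 hmem
  rw [← List.getD_eq_getElem _ 0] at heq
  have := two_mul_sub_one_le_getD hs hkd (i := t) (by omega)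
  have := two_mul_sub_one_le_getD hs hkd hi
  have := getD_le_getD hs (show t ≤ i by omega)
  omega

end RankFormula

structure IsPodList (L : List ℕ) : Prop where
  sorted : L.Pairwise (· ≥ ·)
  pos : ∀ x ∈ L, 0 < x
  count_le_one : ∀ x, Odd x → L.count x ≤ 1

def RowsAvoidColumns (L : List ℕ) (k : ℕ) : Prop :=
  ∀ i, k ≤ i → i < L.length → ∀ c, k < c → mcolLen L c ≠ mrowLen (L.getD i 0)

def CornerOneOfRankZero (L : List ℕ) (k : ℕ) : Prop :=
  mrank L (k - 1) = 0 → L.getD (k - 1) 0 = 2 * k - 1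

section Levels

variable {L : List ℕ} {k i : ℕ}

theorem eq_of_getD_eq_of_odd (hodd : ∀ x, Odd x → L.count x ≤ 1) {j : ℕ} (hij : i ≤ j)
    (hj : j < L.length) (h : L.getD i 0 = L.getD j 0) (hx : Odd (L.getD i 0)) : i = j := by
  by_contra hne
  have h₁ := List.count_pos_iff.2 (getD_mem_take (L := L) (lt_of_le_of_ne hij hne) (by omega))
  have h₂ := List.count_pos_iff.2 (h ▸ getD_mem_drop le_rfl hj)
  have := hodd _ hx
  have hsplit := List.count_append (a := L.getD i 0) (l₁ := L.take j) (l₂ := L.drop j)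
  rw [List.take_append_drop] at hsplit
  omega

theorem arm_succ_le (hs : L.Pairwise (· ≥ ·)) : arm L k (i + 1) ≤ arm L k i := by
  have := getD_le_getD hs (show i ≤ i + 1 by omega)
  unfold arm mrowLen
  omega

theorem arm_self (hs : L.Pairwise (· ≥ ·)) (hkd : mdurfee L = k) : arm L k k = 0 := by
  have := getD_le_two_mul hs hkd le_rfl
  unfold arm mrowLen
  omega

theorem countP_drop_eq_zero (hs : L.Pairwise (· ≥ ·)) (hkd : mdurfee L = k) {t : ℕ}
    (ht : 2 * k < t) : (L.drop k).countP (t ≤ ·) = 0 :=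
  List.countP_eq_zero.2 fun x hx h => by
    have := le_two_mul_of_mem_drop hs hkd hx
    simp only [decide_eq_true_eq] at h
    omega

theorem leg_self (hs : L.Pairwise (· ≥ ·)) (hkd : mdurfee L = k) : leg L k k = 0 :=
  countP_drop_eq_zero hs hkd (by omega)

theorem leg_succ_add_legOnes_le (L : List ℕ) (k i : ℕ) :
    leg L k (i + 1) + legOnes L k i ≤ leg L k i := by
  rw [leg_eq_countP_add_legOnes L k i, leg]
  gcongr
  exact List.countP_mono_left fun x _ h => by simp only [decide_eq_true_eq] at h ⊢; omega

theorem legOnes_le_one (hodd : ∀ x, Odd x → L.count x ≤ 1) : legOnes L k i ≤ 1 :=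
  ((List.drop_sublist k L).count_le _).trans (hodd _ (odd_two_mul_add_one i))

theorem arm_lt_of_odd (hs : L.Pairwise (· ≥ ·)) (hodd : ∀ x, Odd x → L.count x ≤ 1)
    (hkd : mdurfee L = k) (hi : i < k) (hp : L.getD i 0 % 2 = 1)
    (hc : L.getD i 0 ≠ 2 * k - 1) : arm L k (i + 1) < arm L k i := by
  have h₁ := two_mul_sub_one_le_getD hs hkd hi
  have h₂ := getD_le_getD hs (show i ≤ i + 1 by omega)
  by_contra! hle
  unfold arm mrowLen at hle
  have hik : i + 1 < k := by
    by_contra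
    have := getD_le_two_mul hs hkd (show k ≤ i + 1 by omega)
    omega
  have heq : L.getD i 0 = L.getD (i + 1) 0 := by omega
  have := eq_of_getD_eq_of_odd hodd (show i ≤ i + 1 by omega) (lt_length_of_getD_pos (by omega)) heq
    (Nat.odd_iff.2 hp)
  omega

/-- A strict drop of the arm at level `i` exhibits a column of length `i + 1` to the right of the
Durfee square, and a strict drop of the leg a row of that length below it. -/
theorem not_arm_lt_and_leg_lt (hs : L.Pairwise (· ≥ ·)) (hA : RowsAvoidColumns L k) :
    ¬ (arm L k (i + 1) < arm L k i ∧ leg L k (i + 1) < leg L k i) := by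
  rintro ⟨harm, hleg⟩
  obtain ⟨x, hx, hx₁, hx₂⟩ := exists_mem_of_countP_lt hleg
  simp only [decide_eq_true_eq] at hx₁ hx₂
  obtain ⟨j, hj, rfl⟩ := exists_getD_eq_of_mem_drop hx
  set c := mrowLen (L.getD i 0) with hc
  have hck : k < c := by
    unfold arm at harm
    omega
  have hcol : mcolLen L c = i + 1 := by
    refine countP_le_eq hs (by omega) (fun t ht => ?_) ?_
    · have := getD_le_getD hs (show t ≤ i by omega)
      rw [hc, mrowLen]
      omega
    · unfold arm mrowLen at harm
      rw [hc, mrowLen]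
      omega
  refine hA j hj (lt_length_of_getD_pos (by omega)) c hck ?_
  rw [hcol, mrowLen]
  omega

theorem corner_facts (hs : L.Pairwise (· ≥ ·)) (hodd : ∀ x, Odd x → L.count x ≤ 1)
    (hkd : mdurfee L = k) (hi : i + 1 = k) (hc : L.getD i 0 = 2 * k - 1) :
    arm L k i = 0 ∧ leg L k i = 0 ∧ legOnes L k i = 0 ∧ mrank L i = 0 := by
  have hodd_c : Odd (L.getD i 0) := ⟨i, by omega⟩
  have hlen : i < L.length := lt_length_of_getD_pos (by omega)
  have harm : arm L k i = 0 := by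
    unfold arm mrowLen
    omega
  have hleg : leg L k i = 0 := List.countP_eq_zero.2 fun x hx h => by
    simp only [decide_eq_true_eq] at h
    obtain ⟨j, hj, rfl⟩ := exists_getD_eq_of_mem_drop hx
    have := getD_le_getD hs (show i ≤ j by omega)
    have := eq_of_getD_eq_of_odd hodd (show i ≤ j by omega) (lt_length_of_getD_pos (by omega))
      (by omega) hodd_c
    omega
  have hones : legOnes L k i = 0 := by
    have := leg_succ_add_legOnes_le L k i
    omega
  have htake : (L.take k).count (2 * i + 1) = 1 := by
    have h₁ := List.count_pos_iff.2 (getD_mem_take (show i < k by omega) hlen)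
    have h₂ := ((List.take_sublist k L).count_le (L.getD i 0)).trans (hodd _ hodd_c)
    rw [hc] at h₁ h₂
    rw [show 2 * i + 1 = 2 * k - 1 by omega]
    omega
  refine ⟨harm, hleg, hones, ?_⟩
  rw [mrank_eq hs hkd (by omega), harm, hleg, hones, htake, Nat.odd_iff.1 hodd_c]
  simp

theorem getD_eq_two_mul_sub_one_iff (hs : L.Pairwise (· ≥ ·))
    (hodd : ∀ x, Odd x → L.count x ≤ 1) (hkd : mdurfee L = k) (hB : CornerOneOfRankZero L k)
    (hi : i < k) : L.getD i 0 = 2 * k - 1 ↔ i + 1 = k ∧ mrank L i = 0 := by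
  refine ⟨fun hc => ?_, fun ⟨hik, hr⟩ => ?_⟩
  · have hik : i + 1 = k := by
      have := two_mul_sub_one_le_getD hs hkd (show k - 1 < k by omega)
      have := getD_le_getD hs (show i ≤ k - 1 by omega)
      have := eq_of_getD_eq_of_odd hodd (show i ≤ k - 1 by omega)
        (lt_length_of_getD_pos (by omega)) (by omega) ⟨k - 1, by omega⟩
      omega
    exact ⟨hik, (corner_facts hs hodd hkd hik hc).2.2.2⟩
  · obtain rfl : i = k - 1 := by omega
    exact hB hr

end Levels

section Uniqueness

/-- The constraints met by the arm `u`, leg `v`, row parity `p` and number `w` of ones in the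
leg at one level, given the arm `u'` and leg `v'` at the next level. -/
def LevelAdmissible (u' v' u v p w : ℕ) : Prop :=
  u' ≤ u ∧ v' ≤ v ∧ ¬ (u' < u ∧ v' < v) ∧ p ≤ 1 ∧ w ≤ 1 ∧ (p = 1 → u' < u) ∧ (w = 1 → v' < v)

/-- The sign of `2 (u - v) - p + w` tells which of the arm and the leg grows, and its parity
tells whether `p` or `w` is `1`. -/
theorem LevelAdmissible.eq {u' v' u₁ v₁ p₁ w₁ u₂ v₂ p₂ w₂ : ℕ}
    (h₁ : LevelAdmissible u' v' u₁ v₁ p₁ w₁) (h₂ : LevelAdmissible u' v' u₂ v₂ p₂ w₂)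
    (hr : 2 * ((u₁ : ℤ) - v₁) - p₁ + w₁ = 2 * ((u₂ : ℤ) - v₂) - p₂ + w₂) :
    u₁ = u₂ ∧ v₁ = v₂ ∧ p₁ = p₂ ∧ w₁ = w₂ := by
  obtain ⟨_, _, _, _, _, _, _⟩ := h₁
  obtain ⟨_, _, _, _, _, _, _⟩ := h₂
  omega

variable {L M : List ℕ} {k i : ℕ}

theorem levelAdmissible (hs : L.Pairwise (· ≥ ·)) (hodd : ∀ x, Odd x → L.count x ≤ 1)
    (hkd : mdurfee L = k) (hA : RowsAvoidColumns L k) (hi : i < k)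
    (hc : L.getD i 0 ≠ 2 * k - 1) :
    LevelAdmissible (arm L k (i + 1)) (leg L k (i + 1)) (arm L k i) (leg L k i)
      (L.getD i 0 % 2) (legOnes L k i) := by
  have hleg := leg_succ_add_legOnes_le L k i
  exact ⟨arm_succ_le hs, by omega, not_arm_lt_and_leg_lt hs hA, by omega,
    legOnes_le_one hodd, fun hp => arm_lt_of_odd hs hodd hkd hi hp hc, fun _ => by omega⟩

theorem level_eq (hL : IsPodList L) (hM : IsPodList M) (hkL : mdurfee L = k)
    (hkM : mdurfee M = k) (hAL : RowsAvoidColumns L k) (hAM : RowsAvoidColumns M k)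
    (hBL : CornerOneOfRankZero L k) (hBM : CornerOneOfRankZero M k) (hi : i < k)
    (harm : arm L k (i + 1) = arm M k (i + 1)) (hleg : leg L k (i + 1) = leg M k (i + 1))
    (hr : mrank L i = mrank M i) :
    arm L k i = arm M k i ∧ leg L k i = leg M k i ∧ legOnes L k i = legOnes M k i ∧
      L.getD i 0 = M.getD i 0 := by
  have hcL := getD_eq_two_mul_sub_one_iff hL.sorted hL.count_le_one hkL hBL hi
  have hcM := getD_eq_two_mul_sub_one_iff hM.sorted hM.count_le_one hkM hBM hi
  by_cases hc : L.getD i 0 = 2 * k - 1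
  · obtain ⟨hik, hr₀⟩ := hcL.1 hc
    have hc' := hcM.2 ⟨hik, hr ▸ hr₀⟩
    obtain ⟨a₁, l₁, o₁, -⟩ := corner_facts hL.sorted hL.count_le_one hkL hik hc
    obtain ⟨a₂, l₂, o₂, -⟩ := corner_facts hM.sorted hM.count_le_one hkM hik hc'
    omega
  · have hc' : M.getD i 0 ≠ 2 * k - 1 := fun h => hc (hcL.2 (hr ▸ hcM.1 h))
    have eL := mrank_eq hL.sorted hkL hi
    have eM := mrank_eq hM.sorted hkM hi
    rw [count_take_eq_zero hL.sorted hkL hi hc] at eL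
    rw [count_take_eq_zero hM.sorted hkM hi hc'] at eM
    have hadmM := levelAdmissible hM.sorted hM.count_le_one hkM hAM hi hc'
    rw [← harm, ← hleg] at hadmM
    obtain ⟨h₁, h₂, h₃, h₄⟩ :=
      (levelAdmissible hL.sorted hL.count_le_one hkL hAL hi hc).eq hadmM (by omega)
    refine ⟨h₁, h₂, h₄, ?_⟩
    rw [getD_eq_arm hL.sorted hkL hi, getD_eq_arm hM.sorted hkM hi, h₁, h₃]

theorem drop_eq_drop_of_leg_eq (hL : IsPodList L) (hM : IsPodList M) (hkL : mdurfee L = k)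
    (hkM : mdurfee M = k) (hleg : ∀ i < k, leg L k i = leg M k i)
    (hones : ∀ i < k, legOnes L k i = legOnes M k i) : L.drop k = M.drop k := by
  refine eq_of_countP_le_eq (hL.sorted.sublist (List.drop_sublist k L))
    (hM.sorted.sublist (List.drop_sublist k M)) (fun x hx => hL.pos x (List.mem_of_mem_drop hx))
    (fun x hx => hM.pos x (List.mem_of_mem_drop hx)) fun t ht => ?_
  rcases lt_or_ge (2 * k) t with hkt | hkt
  · rw [countP_drop_eq_zero hL.sorted hkL hkt, countP_drop_eq_zero hM.sorted hkM hkt]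
  obtain ⟨i, rfl | rfl⟩ : ∃ i, t = 2 * i + 1 ∨ t = 2 * i + 2 := ⟨(t - 1) / 2, by omega⟩
  · exact hleg i (by omega)
  · have eL := leg_eq_countP_add_legOnes L k i
    have eM := leg_eq_countP_add_legOnes M k i
    have := hleg i (by omega)
    have := hones i (by omega)
    omega

theorem eq_of_mrank_eq (hL : IsPodList L) (hM : IsPodList M) (hkL : mdurfee L = k)
    (hkM : mdurfee M = k) (hAL : RowsAvoidColumns L k) (hAM : RowsAvoidColumns M k)
    (hBL : CornerOneOfRankZero L k) (hBM : CornerOneOfRankZero M k)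
    (hr : ∀ i < k, mrank L i = mrank M i) : L = M := by
  have hlevel : ∀ i ≤ k, arm L k i = arm M k i ∧ leg L k i = leg M k i := by
    intro i hi
    induction hi using Nat.decreasingInduction with
    | self =>
      rw [arm_self hL.sorted hkL, arm_self hM.sorted hkM, leg_self hL.sorted hkL,
        leg_self hM.sorted hkM]
      exact ⟨rfl, rfl⟩
    | of_succ i hi ih =>
      obtain ⟨h₁, h₂, -, -⟩ := level_eq hL hM hkL hkM hAL hAM hBL hBM hi ih.1 ih.2 (hr i hi)
      exact ⟨h₁, h₂⟩
  have htop : ∀ i < k, legOnes L k i = legOnes M k i ∧ L.getD i 0 = M.getD i 0 := fun i hi => by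
    obtain ⟨-, -, h₃, h₄⟩ := level_eq hL hM hkL hkM hAL hAM hBL hBM hi (hlevel (i + 1) hi).1
      (hlevel (i + 1) hi).2 (hr i hi)
    exact ⟨h₃, h₄⟩
  rw [← List.take_append_drop k L, ← List.take_append_drop k M,
    take_eq_take_of_getD_eq (hkL ▸ mdurfee_le_length L) (hkM ▸ mdurfee_le_length M)
      fun i hi => (htop i hi).2,
    drop_eq_drop_of_leg_eq hL hM hkL hkM (fun i hi => (hlevel i hi.le).2) fun i hi => (htop i hi).1]

end Uniqueness

section Reduction

variable {L : List ℕ} {k : ℕ}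

theorem lt_mcolLen_iff (hs : L.Pairwise (· ≥ ·)) {c : ℕ} (hc : 0 < c) (t : ℕ) :
    t < mcolLen L c ↔ 2 * c - 1 ≤ L.getD t 0 :=
  lt_countP_le_iff hs (by omega) t

theorem decAt_invariants (hs : L.Pairwise (· ≥ ·)) (hodd : ∀ x, Odd x → L.count x ≤ 1)
    {p : ℕ} (hdrop : L.getD (p + 1) 0 < L.getD p 0)
    (hnew : Odd (L.getD p 0 - 1) → L.getD (p + 1) 0 < L.getD p 0 - 1)
    (hdur : p < mdurfee L → 2 * p + 2 ≤ L.getD p 0) :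
    (decAt L p).Pairwise (· ≥ ·) ∧ (∀ x, Odd x → (decAt L p).count x ≤ 1) ∧
      mdurfee (decAt L p) = mdurfee L ∧ (decAt L p).sum + 1 = L.sum :=
  ⟨pairwise_decAt hs hdrop,
    fun _ hx => count_decAt_le_one hodd (lt_length_of_getD_pos (by omega))
      (fun h => not_mem_of_getD_lt_of_lt_getD hs (hnew h) (by omega)) hx,
    mdurfee_decAt hs hdrop hdur, sum_decAt (by omega)⟩

/-- The witness removes the last cell of column `p + 1` and the last cell of row `p + 1`; each
loses one unit of size, so no rank changes. -/
theorem exists_reduction_of_mcolLen_eq (hs : L.Pairwise (· ≥ ·))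
    (hodd : ∀ x, Odd x → L.count x ≤ 1) (hkd : mdurfee L = k) {i c p : ℕ} (hi : k ≤ i)
    (hrow : mrowLen (L.getD i 0) = p + 1) (hc : k < c) (hcol : mcolLen L c = p + 1) :
    ∃ M : List ℕ, M.Pairwise (· ≥ ·) ∧ (∀ x, Odd x → M.count x ≤ 1) ∧
      mranks M = mranks L ∧ M.sum < L.sum := by
  unfold mrowLen at hrow
  have hpk : p < k := by
    have := getD_le_two_mul hs hkd hi
    omega
  have hp₁ : 2 * c - 1 ≤ L.getD p 0 := (lt_mcolLen_iff hs (by omega) p).1 (by omega)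
  have hp₂ : L.getD (p + 1) 0 < 2 * c - 1 :=
    not_le.1 fun h => absurd ((lt_mcolLen_iff hs (by omega) _).2 h) (by omega)
  set q := mcolLen L (p + 1) - 1 with hq
  have hiq : i < mcolLen L (p + 1) := (lt_mcolLen_iff hs (by omega) i).2 (by omega)
  have hq₁ : 2 * p + 1 ≤ L.getD q 0 := by
    have := (lt_mcolLen_iff hs (c := p + 1) (by omega) q).1 (by omega)
    omega
  have hq₂ : L.getD (q + 1) 0 < 2 * p + 1 :=
    not_le.1 fun h => absurd ((lt_mcolLen_iff hs (c := p + 1) (by omega) (q + 1)).2 (by omega))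
      (by omega)
  have hq₃ : L.getD q 0 ≤ 2 * p + 2 := by
    have := getD_le_getD hs (show i ≤ q by omega)
    omega
  obtain ⟨hs₁, hodd₁, hd₁, hsum₁⟩ := decAt_invariants hs hodd (p := q) (by omega)
    (fun h => by have := Nat.odd_iff.1 h; omega) (fun h => absurd h (by omega))
  set M₁ := decAt L q
  have hM₁p : M₁.getD p 0 = L.getD p 0 := by rw [getD_decAt, if_neg (by omega)]
  have hM₁p' : M₁.getD (p + 1) 0 ≤ L.getD (p + 1) 0 := getD_decAt_le _
  obtain ⟨hs₂, hodd₂, hd₂, hsum₂⟩ := decAt_invariants hs₁ hodd₁ (p := p) (by omega)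
    (fun h => by have := Nat.odd_iff.1 h; omega) (fun _ => by omega)
  refine ⟨decAt M₁ p, hs₂, hodd₂, mranks_eq_of_mrank_eq (hd₂.trans hd₁) fun t ht => ?_, by omega⟩
  rw [mrank_decAt (by omega), mrank_decAt (by omega), hM₁p]
  unfold mrowLen
  split_ifs <;> omega

/-- The witness lowers the corner from `2` to `1`; `r_k = 0` forces column `k` to end at the
square, so the new odd part `2 k - 1` is not repeated. -/
theorem exists_reduction_of_corner_eq (hs : L.Pairwise (· ≥ ·))
    (hodd : ∀ x, Odd x → L.count x ≤ 1) (hkd : mdurfee L = k) {i : ℕ} (hi : i + 1 = k)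
    (hr : mrank L i = 0) (hc : L.getD i 0 = 2 * k) :
    ∃ M : List ℕ, M.Pairwise (· ≥ ·) ∧ (∀ x, Odd x → M.count x ≤ 1) ∧
      mranks M = mranks L ∧ M.sum < L.sum := by
  have hleg : leg L k i = 0 := by
    have e := mrank_eq hs hkd (show i < k by omega)
    rw [count_take_eq_zero hs hkd (by omega) (by omega), hr, hc] at e
    have := leg_succ_add_legOnes_le L k i
    unfold arm mrowLen at e
    omega
  have hnext : L.getD (i + 1) 0 < 2 * k - 1 := by
    by_contra h
    have hpos : 0 < leg L k i :=
      List.countP_pos_iff.2 ⟨_, getD_mem_drop hi.ge (lt_length_of_getD_pos (by omega)),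
        by simp only [decide_eq_true_eq]; omega⟩
    omega
  obtain ⟨hs', hodd', hd', hsum'⟩ :=
    decAt_invariants hs hodd (p := i) (by omega) (fun _ => by omega) (fun _ => by omega)
  refine ⟨decAt L i, hs', hodd', mranks_eq_of_mrank_eq hd' fun t ht => ?_, by omega⟩
  rw [mrank_decAt (by omega), hc]
  unfold mrowLen
  split_ifs <;> omega

theorem getD_eq_two_mul_of_mrank_eq_zero (hs : L.Pairwise (· ≥ ·)) (hkd : mdurfee L = k)
    (hA : RowsAvoidColumns L k) {i : ℕ} (hi : i + 1 = k) (hr : mrank L i = 0)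
    (hc : L.getD i 0 ≠ 2 * k - 1) : L.getD i 0 = 2 * k := by
  have e := mrank_eq hs hkd (show i < k by omega)
  rw [count_take_eq_zero hs hkd (by omega) hc, hr] at e
  have := leg_succ_add_legOnes_le L k i
  have := two_mul_sub_one_le_getD hs hkd (show i < k by omega)
  have hboth := not_arm_lt_and_leg_lt hs hA (i := i)
  subst hi
  rw [arm_self hs hkd, leg_self hs hkd] at hboth
  unfold arm mrowLen at e hboth
  omega

theorem isPodList_filter_ne_zero {M : List ℕ} (hs : M.Pairwise (· ≥ ·))
    (hodd : ∀ x, Odd x → M.count x ≤ 1) : IsPodList (M.filter (· ≠ 0)) :=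
  ⟨hs.sublist List.filter_sublist,
    fun x hx => Nat.pos_of_ne_zero (by simpa using (List.mem_filter.1 hx).2),
    fun x hx => (List.filter_sublist.count_le x).trans (hodd x hx)⟩

theorem exists_reduction (hL : IsPodList L) (hkd : mdurfee L = k) (hk : 1 ≤ k)
    (h : ¬ (RowsAvoidColumns L k ∧ CornerOneOfRankZero L k)) :
    ∃ M : List ℕ, IsPodList M ∧ mranks M = mranks L ∧ M.sum < L.sum := by
  suffices ∃ M : List ℕ, M.Pairwise (· ≥ ·) ∧ (∀ x, Odd x → M.count x ≤ 1) ∧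
      mranks M = mranks L ∧ M.sum < L.sum by
    obtain ⟨M, hs, hodd, hr, hsum⟩ := this
    exact ⟨_, isPodList_filter_ne_zero hs hodd, (mranks_filter_ne_zero hs).trans hr,
      (sum_filter_ne_zero M).trans_lt hsum⟩
  by_cases hA : RowsAvoidColumns L k
  · have hB : ¬ CornerOneOfRankZero L k := fun hB => h ⟨hA, hB⟩
    unfold CornerOneOfRankZero at hB
    push Not at hB
    exact exists_reduction_of_corner_eq hL.sorted hL.count_le_one hkd (by omega) hB.1
      (getD_eq_two_mul_of_mrank_eq_zero hL.sorted hkd hA (by omega) hB.1 hB.2)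
  · unfold RowsAvoidColumns at hA
    push Not at hA
    obtain ⟨i, hi, hil, c, hc, hcol⟩ := hA
    have hpos := hL.pos _ (List.getD_eq_getElem L 0 hil ▸ List.getElem_mem hil)
    have hrow : mrowLen (L.getD i 0) = mrowLen (L.getD i 0) - 1 + 1 := by
      unfold mrowLen
      omega
    exact exists_reduction_of_mcolLen_eq hL.sorted hL.count_le_one hkd hi hrow hc
      (hcol.trans hrow)

end Reduction

theorem mdurfee_eq_of_mranks_eq {L M : List ℕ} (hr : mranks M = mranks L) :
    mdurfee M = mdurfee L := by
  simpa [mranks] using congrArg List.length hr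

theorem mrank_eq_of_mranks_eq {L M : List ℕ} (hr : mranks M = mranks L) {i : ℕ}
    (hi : i < mdurfee L) : mrank M i = mrank L i := by
  have h := congrArg (·[i]?) hr
  simp only [mranks, List.getElem?_map, List.getElem?_range hi,
    List.getElem?_range ((mdurfee_eq_of_mranks_eq hr).symm ▸ hi), Option.map_some,
    Option.some.injEq] at h
  exact h

theorem sum_le_of_mranks_eq {L : List ℕ} {k : ℕ} (hL : IsPodList L) (hkd : mdurfee L = k)
    (hk : 1 ≤ k) (hA : RowsAvoidColumns L k) (hB : CornerOneOfRankZero L k) {M : List ℕ}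
    (hM : IsPodList M) (hr : mranks M = mranks L) : L.sum ≤ M.sum := by
  induction hm : M.sum using Nat.strong_induction_on generalizing M with
  | _ m ih =>
    have hkM : mdurfee M = k := (mdurfee_eq_of_mranks_eq hr).trans hkd
    by_cases hcond : RowsAvoidColumns M k ∧ CornerOneOfRankZero M k
    · rw [← hm, eq_of_mrank_eq hL hM hkd hkM hA hcond.1 hB hcond.2
        fun i hi => (mrank_eq_of_mranks_eq hr (hkd ▸ hi)).symm]
    · obtain ⟨M', hM', hr', hlt⟩ := exists_reduction hM hkM hk hcond
      exact (ih _ (hm ▸ hlt) hM' (hr'.trans hr) rfl).trans (hm ▸ hlt.le)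

section Partitions

variable {n : ℕ}

theorem count_sparts (μ : n.Partition) (x : ℕ) : (sparts μ).count x = μ.parts.count x := by
  rw [sparts, ← Multiset.coe_count, Multiset.sort_eq]

theorem sum_sparts (μ : n.Partition) : (sparts μ).sum = n := by
  rw [sparts, ← Multiset.sum_coe, Multiset.sort_eq, μ.parts_sum]

theorem isPodList_sparts {μ : n.Partition} (hμ : Pod μ) : IsPodList (sparts μ) where
  sorted := Multiset.pairwise_sort _ _
  pos x hx := μ.parts_pos (by rwa [sparts, ← Multiset.mem_coe, Multiset.sort_eq] at hx)
  count_le_one x hx := (count_sparts μ x).trans_le (hμ x hx)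

theorem pod_of_isPodList {μ : n.Partition} (h : IsPodList (sparts μ)) : Pod μ :=
  fun x hx => count_sparts μ x ▸ h.count_le_one x hx

theorem exists_sparts_eq {L : List ℕ} (hL : IsPodList L) :
    ∃ μ : L.sum.Partition, sparts μ = L :=
  ⟨⟨L, fun h => hL.pos _ (Multiset.mem_coe.1 h), Multiset.sum_coe L⟩,
    List.Perm.eq_of_pairwise' (Multiset.pairwise_sort _ _) hL.sorted
      (Multiset.coe_eq_coe.1 (Multiset.sort_eq _ _))⟩

end Partitions

theorem statement16 {n : ℕ} (μ : n.Partition) (hpod : Pod μ) (k : ℕ)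
    (hkd : mdurfee (sparts μ) = k) (hk : 1 ≤ k) :
    MinBasis μ ↔
      ((∀ i, k ≤ i → i < (sparts μ).length →
          ∀ c, k < c → mcolLen (sparts μ) c ≠ mrowLen ((sparts μ).getD i 0)) ∧
        (mrank (sparts μ) (k - 1) = 0 → (sparts μ).getD (k - 1) 0 = 2 * k - 1)) := by
  have hL := isPodList_sparts hpod
  change MinBasis μ ↔ RowsAvoidColumns (sparts μ) k ∧ CornerOneOfRankZero (sparts μ) k
  refine ⟨fun hmin => ?_, fun hcond => ⟨hpod, fun m μ' hpod' hr => ?_⟩⟩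
  · by_contra hcond
    obtain ⟨M, hM, hrM, hlt⟩ := exists_reduction hL hkd hk hcond
    obtain ⟨μ', hμ'⟩ := exists_sparts_eq hM
    rw [← hμ'] at hM hrM
    have := hmin.2 _ μ' (pod_of_isPodList hM) hrM
    rw [sum_sparts] at hlt
    omega
  · have := sum_le_of_mranks_eq hL hkd hk hcond.1 hcond.2 (isPodList_sparts hpod') hr
    rwa [sum_sparts, sum_sparts] at this

end BasisPartitions
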